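/- arXiv:2006.09668 — 4 statements merged into one kernel-verified Lean document; each statement's English description precedes it below -/
import Mathlib

section
/- Let (Q_i)_{i=1}^∞ ⊂ [0,1] be a stochastic process such that (Q_i^{-1}) is a supermartingale with respect to a filtration (𝒢_i). Then for any sub-σ-algebra 𝒢_0 ⊆ 𝒢_1 and any T, E[∑_{i=1}^T ∏_{j=1}^i (1 - Q_j) | 𝒢_0] ≤ E[Q_1^{-1} | 𝒢_0] - 1 almost surely. -/
/-!
Put `W k n = 1 + ∑_{i=k}^{k+n-1} ∏_{j=k}^{i} (1 - Q j)`, so that `W k (n+1) = 1 + (1 - Q k) W (k+1) n`.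
By induction on `n`, `E[W k n | 𝒢 k] ≤ Q k⁻¹`: pulling out the `𝒢 k`-measurable factor `1 - Q k`
and using the tower property, the induction hypothesis at `k + 1` and the supermartingale
inequality `E[Q (k+1)⁻¹ | 𝒢 k] ≤ Q k⁻¹` give `E[W k (n+1) | 𝒢 k] ≤ 1 + (1 - Q k) Q k⁻¹ = Q k⁻¹`.
The theorem is the case `k = 1`, conditioned further on `𝒢₀ ⊆ 𝒢 1`.
-/

open MeasureTheory Finset

section CondExp

variable {Ω : Type*} {m m₁ m0 : MeasurableSpace Ω} {μ : Measure Ω} {f g : Ω → ℝ}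

lemma condExp_const_add_ae_eq [IsFiniteMeasure μ] (hm : m ≤ m0) (c : ℝ) (hf : Integrable f μ) :
    μ[fun ω => c + f ω | m] =ᵐ[μ] fun ω => c + μ[f | m] ω := by
  have h := condExp_add (m := m) (integrable_const c) hf
  rwa [condExp_const hm] at h

lemma condExp_sub_const_ae_eq [IsFiniteMeasure μ] (hm : m ≤ m0) (hf : Integrable f μ) (c : ℝ) :
    μ[fun ω => f ω - c | m] =ᵐ[μ] fun ω => μ[f | m] ω - c := by
  have h := condExp_sub (m := m) hf (integrable_const c)
  rwa [condExp_const hm] at h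

lemma condExp_le_condExp_of_condExp_le (hm : m ≤ m₁) (hm₁ : m₁ ≤ m0)
    [SigmaFinite (μ.trim hm₁)] (hg : Integrable g μ) (hfg : μ[f | m₁] ≤ᵐ[μ] g) :
    μ[f | m] ≤ᵐ[μ] μ[g | m] :=
  (condExp_condExp_of_le hm hm₁).symm.trans_le (condExp_mono integrable_condExp hg hfg)

end CondExp

section SurvivalSum

variable {Ω : Type*} (Q : ℕ → Ω → ℝ)

/-- `survivalSum Q k n = 1 + ∑_{i=k}^{k+n-1} ∏_{j=k}^{i} (1 - Q j)`. -/
def survivalSum (k n : ℕ) (ω : Ω) : ℝ :=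
  ∑ i ∈ range (n + 1), ∏ j ∈ range i, (1 - Q (k + j) ω)

lemma survivalSum_zero (k : ℕ) (ω : Ω) : survivalSum Q k 0 ω = 1 := by
  simp [survivalSum]

lemma survivalSum_succ (k n : ℕ) (ω : Ω) :
    survivalSum Q k (n + 1) ω = 1 + (1 - Q k ω) * survivalSum Q (k + 1) n ω := by
  simp only [survivalSum, sum_range_succ' _ (n + 1), prod_range_succ', mul_sum, range_zero,
    prod_empty]
  rw [add_comm]
  congr 1
  refine sum_congr rfl fun i _ => ?_
  rw [mul_comm]
  congr 2 with j
  rw [add_assoc, add_comm j]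

lemma sum_Icc_prod_Icc_one_sub (T : ℕ) (ω : Ω) :
    ∑ i ∈ Icc 1 T, ∏ j ∈ Icc 1 i, (1 - Q j ω) = survivalSum Q 1 T ω - 1 := by
  rw [survivalSum, sum_range_succ', ← Ico_add_one_right_eq_Icc, sum_Ico_eq_sum_range]
  simp only [prod_range_zero, add_sub_cancel_right, Nat.add_sub_cancel]
  refine sum_congr rfl fun i _ => ?_
  rw [← Ico_add_one_right_eq_Icc, prod_Ico_eq_prod_range, Nat.add_sub_cancel, add_comm 1 i]

lemma abs_survivalSum_le (hQ0 : ∀ i ω, 0 ≤ Q i ω) (hQ1 : ∀ i ω, Q i ω ≤ 1) (k n : ℕ) (ω : Ω) :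
    |survivalSum Q k n ω| ≤ n + 1 := by
  have h_term : ∀ i, |∏ j ∈ range i, (1 - Q (k + j) ω)| ≤ 1 := fun i => by
    rw [abs_prod]
    exact prod_le_one (fun _ _ => abs_nonneg _) fun j _ =>
      abs_le.2 ⟨by linarith [hQ1 (k + j) ω], by linarith [hQ0 (k + j) ω]⟩
  calc |survivalSum Q k n ω| ≤ ∑ i ∈ range (n + 1), |∏ j ∈ range i, (1 - Q (k + j) ω)| :=
        abs_sum_le_sum_abs _ _
    _ ≤ ∑ _i ∈ range (n + 1), (1 : ℝ) := sum_le_sum fun i _ => h_term i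
    _ = n + 1 := by simp

lemma integrable_survivalSum {m0 : MeasurableSpace Ω} {μ : Measure Ω} [IsFiniteMeasure μ]
    (hQm : ∀ i, Measurable (Q i)) (hQ0 : ∀ i ω, 0 ≤ Q i ω) (hQ1 : ∀ i ω, Q i ω ≤ 1) (k n : ℕ) :
    Integrable (survivalSum Q k n) μ := by
  refine .of_bound (by unfold survivalSum; fun_prop) (n + 1) (.of_forall fun ω => ?_)
  exact abs_survivalSum_le Q hQ0 hQ1 k n ω

end SurvivalSum

section Supermartingale

variable {Ω : Type*} {m0 : MeasurableSpace Ω} {μ : Measure Ω} {𝒢 : Filtration ℕ m0}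
  {Q : ℕ → Ω → ℝ}

lemma stronglyAdapted_of_supermartingale_inv
    (hsup : Supermartingale (fun i ω => (Q i ω)⁻¹) 𝒢 μ) : StronglyAdapted 𝒢 Q := fun i => by
  have h := (hsup.stronglyAdapted i).measurable.inv.stronglyMeasurable
  simpa only [Pi.inv_def, inv_inv] using h

lemma condExp_survivalSum_le [IsFiniteMeasure μ] (hQpos : ∀ i ω, 0 < Q i ω)
    (hQle : ∀ i ω, Q i ω ≤ 1) (hsup : Supermartingale (fun i ω => (Q i ω)⁻¹) 𝒢 μ) (k n : ℕ) :
    μ[survivalSum Q k n | 𝒢 k] ≤ᵐ[μ] fun ω => (Q k ω)⁻¹ := by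
  have hQm := stronglyAdapted_of_supermartingale_inv hsup
  have hint := integrable_survivalSum (μ := μ) Q (fun i => ((hQm i).mono (𝒢.le i)).measurable)
    (fun i ω => (hQpos i ω).le) hQle
  induction n generalizing k with
  | zero =>
    rw [funext (survivalSum_zero Q k), condExp_const (𝒢.le k)]
    exact .of_forall fun ω => one_le_inv_iff₀.2 ⟨hQpos k ω, hQle k ω⟩
  | succ n ih =>
    have h_pull : μ[survivalSum Q k (n + 1) | 𝒢 k]
        =ᵐ[μ] fun ω => 1 + (1 - Q k ω) * μ[survivalSum Q (k + 1) n | 𝒢 k] ω := by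
      rw [funext (survivalSum_succ Q k n)]
      have h_int : Integrable (fun ω => (1 - Q k ω) * survivalSum Q (k + 1) n ω) μ :=
        ((hint k (n + 1)).sub (integrable_const 1)).congr
          (.of_forall fun ω => by simp [survivalSum_succ])
      filter_upwards [condExp_const_add_ae_eq (𝒢.le k) 1 h_int,
        condExp_mul_of_stronglyMeasurable_left (stronglyMeasurable_const.sub (hQm k)) h_int
          (hint (k + 1) n)] with ω h_add h_mul
      rw [h_add]
      exact congrArg (1 + ·) h_mul
    have h_next : μ[survivalSum Q (k + 1) n | 𝒢 k] ≤ᵐ[μ] fun ω => (Q k ω)⁻¹ :=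
      (condExp_le_condExp_of_condExp_le (𝒢.mono k.le_succ) (𝒢.le _) (hsup.integrable _)
        (ih (k + 1))).trans (hsup.condExp_ae_le k.le_succ)
    filter_upwards [h_pull, h_next] with ω h_pull h_next
    calc μ[survivalSum Q k (n + 1) | 𝒢 k] ω
        = 1 + (1 - Q k ω) * μ[survivalSum Q (k + 1) n | 𝒢 k] ω := h_pull
      _ ≤ 1 + (1 - Q k ω) * (Q k ω)⁻¹ := by gcongr; linarith [hQle k ω]
      _ = (Q k ω)⁻¹ := by field_simp [(hQpos k ω).ne']; ring

end Supermartingale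

/-- Let `(Q_i)_{i≥1} ⊂ (0,1]` be a stochastic process such that `(Q_i⁻¹)` is a
supermartingale w.r.t. a filtration `(𝒢_i)`.  Then for any sub-σ-algebra
`𝒢₀ ⊆ 𝒢₁` and any `T`,
`E[∑_{i=1}^T ∏_{j=1}^i (1 - Q_j) | 𝒢₀] ≤ E[Q₁⁻¹ | 𝒢₀] - 1` a.s. -/
theorem supermartingale_geometric_sum_bound {Ω : Type*} {m0 : MeasurableSpace Ω}
    (μ : Measure Ω) [IsProbabilityMeasure μ]
    (𝒢 : Filtration ℕ m0) (Q : ℕ → Ω → ℝ)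
    (hQpos : ∀ i ω, 0 < Q i ω) (hQle : ∀ i ω, Q i ω ≤ 1)
    (hsup : Supermartingale (fun i ω => (Q i ω)⁻¹) 𝒢 μ)
    (𝒢₀ : MeasurableSpace Ω) (h𝒢₀ : 𝒢₀ ≤ 𝒢 1) (T : ℕ) :
    μ[fun ω => ∑ i ∈ Finset.Icc 1 T, ∏ j ∈ Finset.Icc 1 i, (1 - Q j ω) | 𝒢₀]
      ≤ᵐ[μ] fun ω => (μ[fun ω' => (Q 1 ω')⁻¹ | 𝒢₀]) ω - 1 := by
  have hQm := stronglyAdapted_of_supermartingale_inv hsup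
  have hint := integrable_survivalSum (μ := μ) Q (fun i => ((hQm i).mono (𝒢.le i)).measurable)
    (fun i ω => (hQpos i ω).le) hQle
  simp_rw [sum_Icc_prod_Icc_one_sub]
  filter_upwards [condExp_sub_const_ae_eq (h𝒢₀.trans (𝒢.le 1)) (hint 1 T) 1,
    condExp_le_condExp_of_condExp_le h𝒢₀ (𝒢.le 1) (hsup.integrable 1)
      (condExp_survivalSum_le hQpos hQle hsup 1 T)] with ω h_sub h_le
  rw [h_sub]
  linarith
end

section
/- With B_t = B_{t-1} + SᵀS, Z_t = Z_{t-1} + Sᵀε, C = S B_{t-1}^{-1} Sᵀ, d = S B_{t-1}^{-1} Z_{t-1}, the difference Z_tᵀ B_t^{-1} Z_t - Z_{t-1}ᵀ B_{t-1}^{-1} Z_{t-1} equals ‖ε + C^{-1} d‖²_{C(I+C)^{-1}} - dᵀ(I+C)^{-1}(I + C^{-1}) d, provided C is invertible. -/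
open Matrix

private lemma shiftL {m n : ℕ} (N : Matrix (Fin m) (Fin n) ℝ) (x : Fin n → ℝ) (w : Fin m → ℝ) :
    (N *ᵥ x) ⬝ᵥ w = x ⬝ᵥ (Nᵀ *ᵥ w) := by
  rw [Matrix.dotProduct_mulVec, Matrix.vecMul_transpose]

private lemma dot_shift {m n : ℕ} (N : Matrix (Fin m) (Fin n) ℝ) (x : Fin m → ℝ) (y : Fin n → ℝ) :
    x ⬝ᵥ (N *ᵥ y) = (Nᵀ *ᵥ x) ⬝ᵥ y := by
  rw [dotProduct_mulVec, mulVec_transpose]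

/-- Sherman–Morrison–Woodbury step for the Mahalanobis distance process:
with `B_t = B_{t-1} + SᵀS`, `Z_t = Z_{t-1} + Sᵀε`, `C = S B_{t-1}⁻¹ Sᵀ`
invertible, and `d = S B_{t-1}⁻¹ Z_{t-1}`,
`Z_tᵀ B_t⁻¹ Z_t - Z_{t-1}ᵀ B_{t-1}⁻¹ Z_{t-1}
  = ‖ε + C⁻¹d‖²_{C(I+C)⁻¹} - dᵀ(I+C)⁻¹(I + C⁻¹)d`. -/
theorem mahalanobis_increment_identity {M A : ℕ}
    (B : Matrix (Fin M) (Fin M) ℝ) (hB : B.PosDef)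
    (S : Matrix (Fin A) (Fin M) ℝ) (ε : Fin A → ℝ) (Z : Fin M → ℝ)
    (C : Matrix (Fin A) (Fin A) ℝ) (hC : C = S * B⁻¹ * Sᵀ)
    (hCinv : IsUnit C.det)
    (d : Fin A → ℝ) (hd : d = S *ᵥ (B⁻¹ *ᵥ Z)) :
    (Z + Sᵀ *ᵥ ε) ⬝ᵥ ((B + Sᵀ * S)⁻¹ *ᵥ (Z + Sᵀ *ᵥ ε)) - Z ⬝ᵥ (B⁻¹ *ᵥ Z) =
      (ε + C⁻¹ *ᵥ d) ⬝ᵥ ((C * (1 + C)⁻¹) *ᵥ (ε + C⁻¹ *ᵥ d)) -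
        d ⬝ᵥ (((1 + C)⁻¹ * (1 + C⁻¹)) *ᵥ d) := by
  have hdetB : IsUnit B.det := isUnit_iff_ne_zero.mpr (ne_of_gt hB.det_pos)
  have hBsymm : Bᵀ = B := by
    have h := hB.isHermitian.eq
    rwa [conjTranspose_eq_transpose_of_trivial] at h
  have hBi : (B⁻¹)ᵀ = B⁻¹ := by rw [transpose_nonsing_inv, hBsymm]
  have hCpsd : C.PosSemidef := by
    have h := (hB.inv.posSemidef).mul_mul_conjTranspose_same S
    rwa [conjTranspose_eq_transpose_of_trivial, ← hC] at h
  have hICpd : (1 + C).PosDef := Matrix.PosDef.add_posSemidef Matrix.PosDef.one hCpsd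
  have hdetIC : IsUnit (1 + C).det := isUnit_iff_ne_zero.mpr (ne_of_gt hICpd.det_pos)
  set E := (1 + C)⁻¹ with hEdef
  have hEmul : E * (1 + C) = 1 := nonsing_inv_mul _ hdetIC
  have hmulE : (1 + C) * E = 1 := mul_nonsing_inv _ hdetIC
  have hCsymm : Cᵀ = C := by
    rw [hC]; simp [Matrix.transpose_mul, hBi, Matrix.mul_assoc]
  have hEsymm : Eᵀ = E := by
    rw [hEdef, transpose_nonsing_inv, transpose_add, transpose_one, hCsymm]
  have hCi : C * C⁻¹ = 1 := mul_nonsing_inv _ hCinv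
  have hiC : C⁻¹ * C = 1 := nonsing_inv_mul _ hCinv
  have hCisym : (C⁻¹)ᵀ = C⁻¹ := by rw [transpose_nonsing_inv, hCsymm]
  have hcomm : C * E = E * C := by
    calc C * E = (E * (1 + C)) * (C * E) := by rw [hEmul, Matrix.one_mul]
      _ = E * ((1 + C) * C * E) := by simp only [Matrix.mul_assoc]
      _ = E * (C * ((1 + C) * E)) := by rw [show (1+C) * C = C * (1+C) by noncomm_ring]; simp only [Matrix.mul_assoc]
      _ = E * C := by rw [hmulE, Matrix.mul_one]
  have idE1 : 1 - C * E = E := by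
    have h := hmulE
    rw [Matrix.add_mul, Matrix.one_mul] at h
    rw [← h]; noncomm_ring
  have idEC1 : 1 - E * C = E := by rw [← hcomm]; exact idE1
  have idCEC : C - C * E * C = C * E := by
    calc C - C * E * C = C * (1 - E * C) := by noncomm_ring
      _ = C * E := by rw [idEC1]
  have idCECi : C * E * C⁻¹ = E := by rw [hcomm, Matrix.mul_assoc, hCi, Matrix.mul_one]
  have hcommi : C⁻¹ * E = E * C⁻¹ := by
    calc C⁻¹ * E = C⁻¹ * E * (C * C⁻¹) := by rw [hCi, Matrix.mul_one]
      _ = C⁻¹ * (E * C) * C⁻¹ := by simp only [Matrix.mul_assoc]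
      _ = C⁻¹ * C * (E * C⁻¹) := by rw [← hcomm]; simp only [Matrix.mul_assoc]
      _ = E * C⁻¹ := by rw [hiC, Matrix.one_mul]
  have hW : (B + Sᵀ * S)⁻¹ = B⁻¹ - B⁻¹ * Sᵀ * E * S * B⁻¹ := by
    have hAC : IsUnit ((1 : Matrix (Fin A) (Fin A) ℝ)⁻¹ + S * B⁻¹ * Sᵀ) := by
      rw [inv_one, ← hC]
      exact (Matrix.isUnit_iff_isUnit_det _).mpr hdetIC
    have h := Matrix.add_mul_mul_inv_eq_sub B Sᵀ 1 S
      ((Matrix.isUnit_iff_isUnit_det _).mpr hdetB) isUnit_one hAC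
    rw [Matrix.mul_one, inv_one, ← hC, ← hEdef] at h
    exact h
  subst hd
  rw [hW]
  simp only [Matrix.sub_mul, Matrix.mul_sub, Matrix.add_mul, Matrix.mul_add, sub_mulVec, add_mulVec, mulVec_add, dotProduct_add, add_dotProduct, dotProduct_sub, sub_dotProduct, mulVec_mulVec]
  simp only [shiftL, mulVec_mulVec, transpose_mul, transpose_transpose, hBi, hCsymm, hEsymm, hCisym, Matrix.mul_assoc]
  have hCX : ∀ X : Matrix (Fin A) (Fin M) ℝ, S * (B⁻¹ * (Sᵀ * X)) = C * X := by
    intro X; rw [hC]; simp [Matrix.mul_assoc]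
  have hCXa : ∀ X : Matrix (Fin A) (Fin A) ℝ, S * (B⁻¹ * (Sᵀ * X)) = C * X := by
    intro X; rw [hC]; simp [Matrix.mul_assoc]
  have hC' : S * (B⁻¹ * Sᵀ) = C := by rw [hC, Matrix.mul_assoc]
  have hiCX : ∀ X : Matrix (Fin A) (Fin A) ℝ, C⁻¹ * (C * X) = X := by
    intro X; rw [← Matrix.mul_assoc, hiC, Matrix.one_mul]
  have hiCX' : ∀ X : Matrix (Fin A) (Fin M) ℝ, C⁻¹ * (C * X) = X := by
    intro X; rw [← Matrix.mul_assoc, hiC, Matrix.one_mul]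
  have hCECiX : ∀ X : Matrix (Fin A) (Fin M) ℝ, C * (E * (C⁻¹ * X)) = E * X := by
    intro X
    rw [show C * (E * (C⁻¹ * X)) = C * E * C⁻¹ * X by simp only [Matrix.mul_assoc], idCECi]
  simp only [hCX, hCXa, hC', hiCX, hiCX', hCECiX, Matrix.one_mul]
  have m1 : Z ⬝ᵥ (B⁻¹ * Sᵀ) *ᵥ ε = ε ⬝ᵥ (S * B⁻¹) *ᵥ Z := by
    rw [dotProduct_comm, shiftL]; simp only [transpose_mul, transpose_transpose, hBi]
  have m2 : Z ⬝ᵥ (B⁻¹ * (Sᵀ * (E * C))) *ᵥ ε = ε ⬝ᵥ (C * (E * (S * B⁻¹))) *ᵥ Z := by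
    rw [dotProduct_comm, shiftL]
    simp only [transpose_mul, transpose_transpose, hBi, hCsymm, hEsymm, Matrix.mul_assoc]
  have m3 : Z ⬝ᵥ (B⁻¹ * (Sᵀ * E)) *ᵥ ε = ε ⬝ᵥ (E * (S * B⁻¹)) *ᵥ Z := by
    rw [dotProduct_comm, shiftL]
    simp only [transpose_mul, transpose_transpose, hBi, hEsymm, Matrix.mul_assoc]
  have hcX : ∀ X : Matrix (Fin A) (Fin M) ℝ, C⁻¹ * (E * X) = E * (C⁻¹ * X) := by
    intro X; rw [← Matrix.mul_assoc, hcommi, Matrix.mul_assoc]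
  rw [m1, m2, m3]
  simp only [hcX]
  have e1 : ε ⬝ᵥ C *ᵥ ε - ε ⬝ᵥ (C * (E * C)) *ᵥ ε = ε ⬝ᵥ (C * E) *ᵥ ε := by
    rw [← dotProduct_sub, ← sub_mulVec,
      show C - C * (E * C) = C * E by rw [← Matrix.mul_assoc]; exact idCEC]
  have key2 : S * B⁻¹ - C * (E * (S * B⁻¹)) = E * (S * B⁻¹) := by
    have h : (1 - C * E) * (S * B⁻¹) = S * B⁻¹ - C * (E * (S * B⁻¹)) := by
      rw [Matrix.sub_mul, Matrix.one_mul, Matrix.mul_assoc]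
    rw [← h, idE1]
  have e2 : ε ⬝ᵥ (S * B⁻¹) *ᵥ Z - ε ⬝ᵥ (C * (E * (S * B⁻¹))) *ᵥ Z
      = ε ⬝ᵥ (E * (S * B⁻¹)) *ᵥ Z := by
    rw [← dotProduct_sub, ← sub_mulVec, key2]
  linarith [e1, e2]
end

section
/- Suppose that for every pair of distinct actions j, k ∈ [N] there exists a nonzero z_{j,k} ∈ ℝ^{2A} with L_j - L_k = (S_jᵀ, S_kᵀ) z_{j,k} (strong local observability). Fix k ≠ 1 with Δ_k = (L_k - L_1)ᵀp* > 0 and let ε ≤ Δ_k / (2√(A) ‖z_{1,k}‖) (so √(2A)·ε·‖z_{1,k}‖ < Δ_k). Then there is no p ∈ ℝ^M satisfying simultaneously: L_1ᵀp > L_kᵀp, ‖S_1 p - S_1 p*‖ ≤ ε, and ‖S_k p - S_k p*‖ ≤ ε. -/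
open Matrix Finset Real

/-- Key property of strong local observability (Lemma on locally observable
games): if `L_j - L_k = S_jᵀ z₁ + S_kᵀ z₂` for some nonzero `z_{j,k} = (z₁,z₂)`,
`Δ_k = (L_k - L_j)ᵀ p* > 0`, and `ε ≤ Δ_k / (2√A ‖z_{j,k}‖)`, then no `p ∈ ℝ^M`
satisfies simultaneously `L_jᵀp > L_kᵀp`, `‖S_j p - S_j p*‖ ≤ ε` and
`‖S_k p - S_k p*‖ ≤ ε`. -/
theorem strong_local_observability_no_confusion {N M A : ℕ}
    (L : Fin N → Fin M → ℝ) (S : Fin N → Matrix (Fin A) (Fin M) ℝ)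
    (pstar : Fin M → ℝ) (j k : Fin N) (hjk : j ≠ k)
    (z₁ z₂ : Fin A → ℝ) (hz : ¬(z₁ = 0 ∧ z₂ = 0))
    (hrep : L j - L k = (S j)ᵀ *ᵥ z₁ + (S k)ᵀ *ᵥ z₂)
    (Δ : ℝ) (hΔdef : Δ = (L k - L j) ⬝ᵥ pstar) (hΔ : 0 < Δ)
    (ε : ℝ)
    (hε : ε ≤ Δ / (2 * Real.sqrt A * Real.sqrt ((∑ i, z₁ i ^ 2) + ∑ i, z₂ i ^ 2))) :
    ¬ ∃ p : Fin M → ℝ,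
        L k ⬝ᵥ p < L j ⬝ᵥ p ∧
        Real.sqrt (∑ i, (S j *ᵥ p - S j *ᵥ pstar) i ^ 2) ≤ ε ∧
        Real.sqrt (∑ i, (S k *ᵥ p - S k *ᵥ pstar) i ^ 2) ≤ ε := by
  rintro ⟨p, hp1, hp2, hp3⟩
  -- A is positive
  have hA : 0 < A := by
    rcases Nat.eq_zero_or_pos A with h0 | h
    · subst h0
      exact (hz ⟨funext fun i => i.elim0, funext fun i => i.elim0⟩).elim
    · exact h
  set a : Fin A → ℝ := S j *ᵥ p - S j *ᵥ pstar with ha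
  set b : Fin A → ℝ := S k *ᵥ p - S k *ᵥ pstar with hb
  have key : (L j - L k) ⬝ᵥ (p - pstar) = z₁ ⬝ᵥ a + z₂ ⬝ᵥ b := by
    rw [hrep, add_dotProduct, Matrix.mulVec_transpose, Matrix.mulVec_transpose,
      ha, hb, ← Matrix.mulVec_sub, ← Matrix.mulVec_sub, Matrix.dotProduct_mulVec,
      Matrix.dotProduct_mulVec]
  set s₁ : ℝ := Real.sqrt (∑ i, z₁ i ^ 2) with hs₁
  set s₂ : ℝ := Real.sqrt (∑ i, z₂ i ^ 2) with hs₂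
  set Sn : ℝ := Real.sqrt ((∑ i, z₁ i ^ 2) + ∑ i, z₂ i ^ 2) with hSn
  have hεnn : 0 ≤ ε := le_trans (Real.sqrt_nonneg _) hp2
  have CS1 : z₁ ⬝ᵥ a ≤ s₁ * ε := by
    calc z₁ ⬝ᵥ a = ∑ i, z₁ i * a i := rfl
    _ ≤ Real.sqrt (∑ i, z₁ i ^ 2) * Real.sqrt (∑ i, a i ^ 2) :=
        Real.sum_mul_le_sqrt_mul_sqrt _ _ _
    _ ≤ s₁ * ε := mul_le_mul_of_nonneg_left hp2 (Real.sqrt_nonneg _)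
  have CS2 : z₂ ⬝ᵥ b ≤ s₂ * ε := by
    calc z₂ ⬝ᵥ b = ∑ i, z₂ i * b i := rfl
    _ ≤ Real.sqrt (∑ i, z₂ i ^ 2) * Real.sqrt (∑ i, b i ^ 2) :=
        Real.sum_mul_le_sqrt_mul_sqrt _ _ _
    _ ≤ s₂ * ε := mul_le_mul_of_nonneg_left hp3 (Real.sqrt_nonneg _)
  have hgap : Δ < (L j - L k) ⬝ᵥ (p - pstar) := by
    have h1 : (L j - L k) ⬝ᵥ (p - pstar)
        = (L j ⬝ᵥ p - L k ⬝ᵥ p) + (L k - L j) ⬝ᵥ pstar := by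
      simp [sub_dotProduct, dotProduct_sub]; ring
    rw [h1, ← hΔdef]
    linarith
  -- positivity of Sn
  have hsum_pos : 0 < (∑ i, z₁ i ^ 2) + ∑ i, z₂ i ^ 2 := by
    rcases not_and_or.mp hz with h | h
    · have : ∃ i, z₁ i ≠ 0 := by
        by_contra hc; push_neg at hc; exact h (funext hc)
      obtain ⟨i, hi⟩ := this
      have h1 : 0 < ∑ i, z₁ i ^ 2 :=
        Finset.sum_pos' (fun _ _ => sq_nonneg _) ⟨i, Finset.mem_univ i, by positivity⟩
      have h2 : 0 ≤ ∑ i, z₂ i ^ 2 := Finset.sum_nonneg fun _ _ => sq_nonneg _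
      linarith
    · have : ∃ i, z₂ i ≠ 0 := by
        by_contra hc; push_neg at hc; exact h (funext hc)
      obtain ⟨i, hi⟩ := this
      have h1 : 0 < ∑ i, z₂ i ^ 2 :=
        Finset.sum_pos' (fun _ _ => sq_nonneg _) ⟨i, Finset.mem_univ i, by positivity⟩
      have h2 : 0 ≤ ∑ i, z₁ i ^ 2 := Finset.sum_nonneg fun _ _ => sq_nonneg _
      linarith
  have hSnpos : 0 < Sn := Real.sqrt_pos.mpr hsum_pos
  have hs1le : s₁ ≤ Sn := Real.sqrt_le_sqrt (by
    have : 0 ≤ ∑ i, z₂ i ^ 2 := Finset.sum_nonneg fun _ _ => sq_nonneg _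
    linarith)
  have hs2le : s₂ ≤ Sn := Real.sqrt_le_sqrt (by
    have : 0 ≤ ∑ i, z₁ i ^ 2 := Finset.sum_nonneg fun _ _ => sq_nonneg _
    linarith)
  have hs1nn : 0 ≤ s₁ := Real.sqrt_nonneg _
  have hs2nn : 0 ≤ s₂ := Real.sqrt_nonneg _
  have hA1 : (1 : ℝ) ≤ Real.sqrt A := by
    rw [show (1:ℝ) = Real.sqrt 1 by simp]
    exact Real.sqrt_le_sqrt (by exact_mod_cast hA)
  -- final chain
  have hεS : ε * (2 * Real.sqrt A * Sn) ≤ Δ := by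
    have hpos : 0 < 2 * Real.sqrt A * Sn := by positivity
    calc ε * (2 * Real.sqrt A * Sn) ≤ (Δ / (2 * Real.sqrt A * Sn)) * (2 * Real.sqrt A * Sn) :=
          mul_le_mul_of_nonneg_right hε hpos.le
    _ = Δ := div_mul_cancel₀ _ hpos.ne'
  have hchain : (L j - L k) ⬝ᵥ (p - pstar) ≤ Δ := by
    rw [key]
    have h1 : s₁ * ε + s₂ * ε ≤ 2 * Sn * ε :=
      by nlinarith
    have h2 : 2 * Sn * ε ≤ 2 * Real.sqrt A * Sn * ε := by nlinarith [Real.sqrt_nonneg (A:ℝ)]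
    nlinarith
  linarith
end

section
/- Consider the dp-easy dynamic pricing game with N actions and M = N outcomes, loss matrix ℓ_{i,j} = -i·1{i ≤ j} + c·1{i > j} with c > -1. Then for any two distinct actions j < k, setting α* = (k - j)/(c + k) ∈ [0,1], the point p = α* e_j + (1-α*) e_k lies in 𝒞_j ∩ 𝒞_k, where 𝒞_i = {p : (L_i)ᵀp ≤ (L_m)ᵀp for all m}; that is, both actions j and k are optimal at p. -/
open Finset

/-- In the dp-easy dynamic pricing game (actions and outcomes labelled
`1, …, N`, loss `ℓ_{i,j} = -i·1{i≤j} + c·1{i>j}` with `c > -1`), for any two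
distinct actions `j < k` the point `p = α* e_j + (1-α*) e_k` with
`α* = (k-j)/(c+k)` satisfies `α* ∈ [0,1]` and lies in `𝒞_j ∩ 𝒞_k`: both
actions `j` and `k` have minimal expected loss at `p`. -/
theorem dp_easy_neighbors {N : ℕ} (c : ℝ) (hc : -1 < c)
    (L : Fin N → Fin N → ℝ)
    (hL : ∀ i a : Fin N, L i a =
      if (i : ℕ) ≤ (a : ℕ) then -((i : ℕ) + 1 : ℝ) else c)
    (j k : Fin N) (hjk : (j : ℕ) < (k : ℕ))
    (α : ℝ) (hα : α = ((k : ℕ) - (j : ℕ) : ℝ) / (c + ((k : ℕ) + 1)))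
    (p : Fin N → ℝ)
    (hp : p = fun a => α * (if a = j then 1 else 0) +
      (1 - α) * (if a = k then 1 else 0)) :
    0 ≤ α ∧ α ≤ 1 ∧
      (∀ i : Fin N, ∑ a, L j a * p a ≤ ∑ a, L i a * p a) ∧
      (∀ i : Fin N, ∑ a, L k a * p a ≤ ∑ a, L i a * p a) := by
  have hJK : ((j : ℕ) : ℝ) < ((k : ℕ) : ℝ) := by exact_mod_cast hjk
  have hJ0 : (0 : ℝ) ≤ ((j : ℕ) : ℝ) := Nat.cast_nonneg _
  have hden : 0 < c + (((k : ℕ) : ℝ) + 1) := by linarith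
  have hmul : α * (c + (((k : ℕ) : ℝ) + 1)) = ((k : ℕ) : ℝ) - ((j : ℕ) : ℝ) := by
    rw [hα]; field_simp
  have hα0 : 0 ≤ α := by
    rw [hα]; exact div_nonneg (by linarith) hden.le
  have hα1 : α ≤ 1 := by
    rw [hα, div_le_one hden]; linarith
  have key : ∀ i : Fin N, ∑ a, L i a * p a = L i j * α + L i k * (1 - α) := by
    intro i
    subst hp
    have h1 : ∀ a : Fin N,
        L i a * (α * (if a = j then 1 else 0) + (1 - α) * (if a = k then 1 else 0))
        = (if a = j then L i a * α else 0) + (if a = k then L i a * (1 - α) else 0) := by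
      intro a; split_ifs <;> ring
    simp only [h1, Finset.sum_add_distrib, Finset.sum_ite_eq', Finset.mem_univ, if_true]
  have hlower : ∀ i : Fin N, -((((j : ℕ) : ℝ)) + 1) ≤ ∑ a, L i a * p a := by
    intro i
    rw [key, hL, hL]
    rcases le_or_gt (i : ℕ) (j : ℕ) with h1 | h1
    · have h2 : (i : ℕ) ≤ (k : ℕ) := h1.trans hjk.le
      have hIJ : ((i : ℕ) : ℝ) ≤ ((j : ℕ) : ℝ) := by exact_mod_cast h1
      simp only [h1, h2, if_true]
      nlinarith
    · have h1' : ¬ ((i : ℕ) ≤ (j : ℕ)) := not_le.2 h1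
      rcases le_or_gt (i : ℕ) (k : ℕ) with h2 | h2
      · have hIK : ((i : ℕ) : ℝ) ≤ ((k : ℕ) : ℝ) := by exact_mod_cast h2
        simp only [h1', h2, if_true, if_false]
        nlinarith [mul_nonneg (sub_nonneg.2 hα1) (sub_nonneg.2 hIK)]
      · have h2' : ¬ ((i : ℕ) ≤ (k : ℕ)) := not_le.2 h2
        simp only [h1', h2', if_false]
        nlinarith
  have hj_eq : ∑ a, L j a * p a = -((((j : ℕ) : ℝ)) + 1) := by
    rw [key, hL, hL]
    simp only [le_refl, hjk.le, if_true]
    ring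
  have hk_eq : ∑ a, L k a * p a = -((((j : ℕ) : ℝ)) + 1) := by
    rw [key, hL, hL]
    simp only [not_le.2 hjk, if_false, le_refl, if_true]
    nlinarith
  exact ⟨hα0, hα1, fun i => hj_eq ▸ hlower i, fun i => hk_eq ▸ hlower i⟩
end
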